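/- arXiv:2305.16508 — 2 statements merged into one kernel-verified Lean document; each statement's English description precedes it below -/
import Mathlib

section
/- For every n ≥ 0 and all x, y ∈ ℝ, |h_n(x) − h_n(x+y)| ≤ 2^n · max(|x|, |x+y|, 1)^n · |y|, where h_n is the n-th normalized Hermite polynomial. -/
open MeasureTheory ProbabilityTheory

/-- The normalized (probabilists') Hermite polynomials, orthonormal w.r.t. N(0,1). -/
noncomputable def hermiteN : ℕ → ℝ → ℝ
  | 0 => fun _ => 1
  | 1 => fun x => x
  | n + 2 => fun x => x / Real.sqrt (n + 2) * hermiteN (n + 1) x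
      - Real.sqrt ((n + 1) / (n + 2)) * hermiteN n x

/-- The standard Gaussian measure on ℝ. -/
noncomputable def gaussMeasure : Measure ℝ := gaussianReal 0 1

/-! Both estimates come from the three-term recurrence, whose coefficients are at most `1/√2`
and `1`. For `|z| ≤ M` with `M ≥ 1` it gives `|h_{n+2}(z)| ≤ (M/√2)|h_{n+1}(z)| + |h_n(z)|`,
and `(√2 M)^n` satisfies this recursion since `M² + 1 ≤ 2M²`. Subtracting the recurrence at
`x` and `w` bounds `h_{n+2}(x) - h_{n+2}(w)` by the two previous differences plus
`|x - w|/√2 · |h_{n+1}(w)|`, and the sup bound on `h_{n+1}` closes the induction for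
`(2M)^n |x - w|`. -/

open Real

lemma hermiteN_add_two (n : ℕ) (x : ℝ) :
    hermiteN (n + 2) x =
      x / √(n + 2) * hermiteN (n + 1) x - √((n + 1) / (n + 2)) * hermiteN n x :=
  rfl

lemma abs_div_sqrt_nat_add_two_le (n : ℕ) (z : ℝ) : |z / √((n : ℝ) + 2)| ≤ |z| / √2 := by
  rw [abs_div, abs_of_nonneg (sqrt_nonneg ((n : ℝ) + 2))]
  exact div_le_div_of_nonneg_left (abs_nonneg z) (by positivity)
    (sqrt_le_sqrt (by linarith [n.cast_nonneg (α := ℝ)]))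

lemma sqrt_nat_add_one_div_add_two_le_one (n : ℕ) : √(((n : ℝ) + 1) / (n + 2)) ≤ 1 :=
  sqrt_le_one.mpr (div_le_one_of_le₀ (by linarith) (by positivity))

lemma abs_hermiteN_add_two_le (n : ℕ) (z : ℝ) :
    |hermiteN (n + 2) z| ≤ |z| / √2 * |hermiteN (n + 1) z| + |hermiteN n z| := by
  rw [hermiteN_add_two]
  refine (abs_sub _ _).trans ?_
  rw [abs_mul, abs_mul, abs_of_nonneg (sqrt_nonneg _)]
  gcongr
  · exact abs_div_sqrt_nat_add_two_le n z
  · exact mul_le_of_le_one_left (abs_nonneg _) (sqrt_nat_add_one_div_add_two_le_one n)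

lemma abs_hermiteN_le {M z : ℝ} (hM : 1 ≤ M) (hz : |z| ≤ M) (n : ℕ) :
    |hermiteN n z| ≤ (√2 * M) ^ n := by
  have hs : √2 ^ 2 = 2 := sq_sqrt zero_le_two
  induction n using Nat.twoStepInduction with
  | zero => simp [hermiteN]
  | one =>
    simpa [hermiteN] using hz.trans (le_mul_of_one_le_left (by linarith) one_lt_sqrt_two.le)
  | more n ih₀ ih₁ =>
    calc |hermiteN (n + 2) z| ≤ M / √2 * (√2 * M) ^ (n + 1) + (√2 * M) ^ n := by
          grw [abs_hermiteN_add_two_le, hz, ih₁, ih₀]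
      _ = (√2 * M) ^ n * (M ^ 2 + 1) := by field_simp; ring
      _ ≤ (√2 * M) ^ n * (2 * M ^ 2) := by gcongr; nlinarith
      _ = (√2 * M) ^ (n + 2) := by rw [pow_add, mul_pow _ _ 2, hs]

lemma hermiteN_add_two_sub (n : ℕ) (x w : ℝ) :
    hermiteN (n + 2) x - hermiteN (n + 2) w =
      x / √(n + 2) * (hermiteN (n + 1) x - hermiteN (n + 1) w)
        + (x - w) / √(n + 2) * hermiteN (n + 1) w
        - √((n + 1) / (n + 2)) * (hermiteN n x - hermiteN n w) := by
  simp only [hermiteN_add_two]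
  ring

lemma abs_hermiteN_add_two_sub_le (n : ℕ) (x w : ℝ) :
    |hermiteN (n + 2) x - hermiteN (n + 2) w| ≤
      |x| / √2 * |hermiteN (n + 1) x - hermiteN (n + 1) w|
        + |x - w| / √2 * |hermiteN (n + 1) w| + |hermiteN n x - hermiteN n w| := by
  rw [hermiteN_add_two_sub]
  refine (abs_sub _ _).trans (add_le_add ((abs_add_le _ _).trans ?_) ?_)
  · rw [abs_mul, abs_mul]
    gcongr <;> exact abs_div_sqrt_nat_add_two_le n _
  · rw [abs_mul, abs_of_nonneg (sqrt_nonneg _)]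
    exact mul_le_of_le_one_left (abs_nonneg _) (sqrt_nat_add_one_div_add_two_le_one n)

theorem abs_hermiteN_sub_le {M x w : ℝ} (hM : 1 ≤ M) (hx : |x| ≤ M) (hw : |w| ≤ M) (n : ℕ) :
    |hermiteN n x - hermiteN n w| ≤ (2 * M) ^ n * |x - w| := by
  have hs : √2 ^ 2 = 2 := sq_sqrt zero_le_two
  have hs₂ : √2 ≤ 2 := by linarith [sqrt_two_lt_three_halves]
  induction n using Nat.twoStepInduction with
  | zero => simp [hermiteN]
  | one => simpa [hermiteN] using le_mul_of_one_le_left (abs_nonneg _) (by linarith)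
  | more n ih₀ ih₁ =>
    have hpow : (√2 * M) ^ n ≤ (2 * M) ^ n := by gcongr
    calc |hermiteN (n + 2) x - hermiteN (n + 2) w|
        ≤ M / √2 * ((2 * M) ^ (n + 1) * |x - w|) + |x - w| / √2 * (√2 * M) ^ (n + 1)
            + (2 * M) ^ n * |x - w| := by
          grw [abs_hermiteN_add_two_sub_le, hx, ih₁, ih₀, abs_hermiteN_le hM hw]
      _ = √2 * M ^ 2 * ((2 * M) ^ n * |x - w|) + M * ((√2 * M) ^ n * |x - w|)
            + 1 * ((2 * M) ^ n * |x - w|) := by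
          rw [pow_succ, pow_succ]
          field_simp
          linear_combination (-M ^ 2 * (2 * M) ^ n * |x - w|) * hs
      _ ≤ 2 * M ^ 2 * ((2 * M) ^ n * |x - w|) + M ^ 2 * ((2 * M) ^ n * |x - w|)
            + M ^ 2 * ((2 * M) ^ n * |x - w|) := by
          gcongr
          · exact le_self_pow₀ hM two_ne_zero
          · exact one_le_pow₀ hM
      _ = (2 * M) ^ (n + 2) * |x - w| := by ring

/-- Local Lipschitz-type bound for normalized Hermite polynomials. -/
theorem hermite_lipschitz (n : ℕ) (x y : ℝ) :
    |hermiteN n x - hermiteN n (x + y)| ≤ 2 ^ n * max (max |x| |x + y|) 1 ^ n * |y| := by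
  set M := max (max |x| |x + y|) 1
  have h := abs_hermiteN_sub_le (le_max_right _ 1 : 1 ≤ M)
    (le_max_of_le_left (le_max_left _ _) : |x| ≤ M)
    (le_max_of_le_left (le_max_right _ _) : |x + y| ≤ M) n
  rwa [mul_pow, sub_add_cancel_left, abs_neg] at h
end

section
/- For the sigmoid activation σ(x) = ∫_0^x e^{−t²/2} dt, the Hermite tail satisfies ε_σ(n) ≤ 2^{−n} for all n ≥ 0. -/
/-!
With g(x) = e^{-x²/2} one has He_{k+1} g = -(He_k g)', so integrating by parts against any
bounded f with bounded derivative gives ∫ f He_{k+1} g = ∫ f' He_k g. Since σ' = g, this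
turns the coefficient a_{k+1} into J_k / √(2π (k+1)!), where J_k = ∫ He_k(x) e^{-x²} dx.
Taking f = g instead gives J_0 = √π, J_1 = 0 and J_{k+2} = -(k+1)/2 · J_k, hence
J_k² ≤ π k!/2^k and a_{k+1}² ≤ 2^{-(k+1)}. Summing the geometric tail gives the bound.
-/

open MeasureTheory ProbabilityTheory

open Polynomial Real

namespace Polynomial

theorem derivative_hermite_succ (n : ℕ) :
    derivative (hermite (n + 1)) = (n + 1 : ℕ) • hermite n := by
  induction n with
  | zero => simp
  | succ n ih =>
    rw [hermite_succ (n + 1), derivative_sub, derivative_mul, derivative_X, one_mul, ih,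
      derivative_smul]
    simp only [nsmul_eq_mul, hermite_succ]
    push_cast
    ring

theorem X_mul_hermite_succ (n : ℕ) :
    X * hermite (n + 1) = hermite (n + 2) + (n + 1 : ℕ) • hermite n := by
  rw [hermite_succ (n + 1), derivative_hermite_succ]
  abel

end Polynomial

theorem sqrt_factorial_succ (n : ℕ) :
    √((n + 1).factorial : ℝ) = √(n + 1 : ℝ) * √(n.factorial : ℝ) := by
  rw [Nat.factorial_succ, Nat.cast_mul, Nat.cast_succ, sqrt_mul (by positivity)]

theorem hermiteN_eq_aeval_hermite_div : ∀ (n : ℕ) (x : ℝ),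
    hermiteN n x = aeval x (hermite n) / √(n.factorial : ℝ)
  | 0, x => by simp [hermiteN]
  | 1, x => by simp [hermiteN]
  | n + 2, x => by
    have hrec : aeval x (hermite (n + 2)) =
        x * aeval x (hermite (n + 1)) - (n + 1 : ℝ) * aeval x (hermite n) := by
      have h := congrArg (aeval x) (X_mul_hermite_succ n)
      simp only [map_mul, aeval_X, map_add, nsmul_eq_mul, map_natCast] at h
      push_cast at h
      linarith
    simp only [hermiteN]
    rw [hermiteN_eq_aeval_hermite_div (n + 1), hermiteN_eq_aeval_hermite_div n, hrec,
      sqrt_factorial_succ (n + 1), sqrt_factorial_succ n, sqrt_div (by positivity)]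
    push_cast
    rw [show (n : ℝ) + 1 + 1 = n + 2 by ring]
    field_simp
    rw [sq_sqrt (by positivity)]

theorem integrable_aeval_mul_exp_neg_mul_sq (q : ℤ[X]) {b : ℝ} (hb : 0 < b) :
    Integrable fun x : ℝ => aeval x q * exp (-b * x ^ 2) := by
  induction q using Polynomial.induction_on' with
  | add p q hp hq =>
    simp only [map_add, add_mul]
    exact hp.add hq
  | monomial n c =>
    have h := (integrable_rpow_mul_exp_neg_mul_sq hb (s := n)
      (by linarith [n.cast_nonneg (α := ℝ)])).const_mul (c : ℝ)
    simpa only [aeval_monomial, algebraMap_int_eq, eq_intCast, rpow_natCast, mul_assoc] using h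

theorem integrable_aeval_mul_gaussian (q : ℤ[X]) :
    Integrable fun x : ℝ => aeval x q * exp (-x ^ 2 / 2) := by
  simpa only [neg_mul, one_div, ← div_eq_inv_mul, neg_div] using
    integrable_aeval_mul_exp_neg_mul_sq q (b := 1 / 2) (by norm_num)

theorem integrable_aeval_mul_gaussian_sq (q : ℤ[X]) :
    Integrable fun x : ℝ => aeval x q * exp (-x ^ 2) := by
  simpa only [neg_mul, one_mul] using integrable_aeval_mul_exp_neg_mul_sq q one_pos

theorem hasDerivAt_gaussian (x : ℝ) :
    HasDerivAt (fun y : ℝ => exp (-y ^ 2 / 2)) (-x * exp (-x ^ 2 / 2)) x := by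
  have h : HasDerivAt (fun y : ℝ => -y ^ 2 / 2) (-x) x :=
    ((hasDerivAt_pow 2 x).neg.div_const 2).congr_deriv (by norm_num; ring)
  simpa [mul_comm] using h.exp

theorem hasDerivAt_aeval_hermite_mul_gaussian (k : ℕ) (x : ℝ) :
    HasDerivAt (fun y : ℝ => aeval y (hermite k) * exp (-y ^ 2 / 2))
      (-(aeval x (hermite (k + 1)) * exp (-x ^ 2 / 2))) x := by
  refine (((hermite k).hasDerivAt_aeval x).mul (hasDerivAt_gaussian x)).congr_deriv ?_
  rw [hermite_succ]
  simp only [map_sub, map_mul, aeval_X]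
  ring

theorem integral_mul_aeval_hermite_succ_mul_gaussian {f f' : ℝ → ℝ} {C C' : ℝ}
    (hf : ∀ x, HasDerivAt f (f' x) x) (hfC : ∀ x, ‖f x‖ ≤ C)
    (hf'C : ∀ x, ‖f' x‖ ≤ C') (k : ℕ) :
    ∫ x, f x * (aeval x (hermite (k + 1)) * exp (-x ^ 2 / 2)) =
      ∫ x, f' x * (aeval x (hermite k) * exp (-x ^ 2 / 2)) := by
  have hf_meas : AEStronglyMeasurable f :=
    (continuous_iff_continuousAt.2 fun x => (hf x).continuousAt).aestronglyMeasurable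
  have hf'_meas : AEStronglyMeasurable f' := by
    rw [show f' = deriv f from funext fun x => (hf x).deriv.symm]
    exact (measurable_deriv f).aestronglyMeasurable
  have hv := fun x => (hasDerivAt_aeval_hermite_mul_gaussian k x).neg
  simp only [neg_neg] at hv
  rw [integral_mul_deriv_eq_deriv_mul_of_integrable (fun x _ => hf x) (fun x _ => hv x)
    ((integrable_aeval_mul_gaussian _).bdd_mul hf_meas (ae_of_all _ hfC))
    ((integrable_aeval_mul_gaussian _).neg.bdd_mul hf'_meas (ae_of_all _ hf'C))
    ((integrable_aeval_mul_gaussian _).neg.bdd_mul hf_meas (ae_of_all _ hfC)), ← integral_neg]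
  simp only [Pi.neg_apply, mul_neg, neg_neg]

noncomputable def gaussianSigmoid (x : ℝ) : ℝ := ∫ t in (0 : ℝ)..x, exp (-t ^ 2 / 2)

theorem integrable_gaussian : Integrable fun t : ℝ => exp (-t ^ 2 / 2) := by
  simpa using integrable_aeval_mul_gaussian 1

theorem hasDerivAt_gaussianSigmoid (x : ℝ) :
    HasDerivAt gaussianSigmoid (exp (-x ^ 2 / 2)) x :=
  intervalIntegral.integral_hasDerivAt_right integrable_gaussian.intervalIntegrable
    (Continuous.aestronglyMeasurable (by fun_prop)).stronglyMeasurableAtFilter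
    (by fun_prop : Continuous fun t : ℝ => exp (-t ^ 2 / 2)).continuousAt

theorem norm_gaussianSigmoid_le (x : ℝ) :
    ‖gaussianSigmoid x‖ ≤ ∫ t, ‖exp (-t ^ 2 / 2)‖ :=
  intervalIntegral.norm_integral_le_integral_norm_uIoc.trans
    (setIntegral_le_integral integrable_gaussian.norm (ae_of_all _ fun _ => norm_nonneg _))

theorem gaussian_mul_gaussian (x : ℝ) : exp (-x ^ 2 / 2) * exp (-x ^ 2 / 2) = exp (-x ^ 2) := by
  rw [← exp_add]
  ring_nf

theorem norm_gaussian_le_one (x : ℝ) : ‖exp (-x ^ 2 / 2)‖ ≤ 1 := by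
  rw [norm_of_nonneg (exp_pos _).le, exp_le_one_iff]
  nlinarith [sq_nonneg x]

theorem norm_mul_gaussian_le_one (x : ℝ) : ‖x * exp (-x ^ 2 / 2)‖ ≤ 1 := by
  rw [norm_mul, norm_eq_abs, norm_of_nonneg (exp_pos _).le, neg_div, exp_neg,
    ← div_eq_mul_inv, div_le_one (exp_pos _)]
  nlinarith [add_one_le_exp (x ^ 2 / 2), sq_abs x, sq_nonneg (|x| - 1)]

noncomputable def hermiteGaussianIntegral (k : ℕ) : ℝ :=
  ∫ x, aeval x (hermite k) * exp (-x ^ 2)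

theorem hermiteGaussianIntegral_zero : hermiteGaussianIntegral 0 = √π := by
  simpa [hermiteGaussianIntegral] using integral_gaussian 1

theorem hermiteGaussianIntegral_succ (k : ℕ) :
    hermiteGaussianIntegral (k + 1) = -∫ x, aeval x (X * hermite k) * exp (-x ^ 2) := by
  calc hermiteGaussianIntegral (k + 1)
      = ∫ x, exp (-x ^ 2 / 2) * (aeval x (hermite (k + 1)) * exp (-x ^ 2 / 2)) := by
        unfold hermiteGaussianIntegral
        congr 1 with x
        rw [← gaussian_mul_gaussian]
        ring
    _ = ∫ x, -x * exp (-x ^ 2 / 2) * (aeval x (hermite k) * exp (-x ^ 2 / 2)) :=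
        integral_mul_aeval_hermite_succ_mul_gaussian hasDerivAt_gaussian norm_gaussian_le_one
          (fun x => by simpa only [neg_mul, norm_neg] using norm_mul_gaussian_le_one x) k
    _ = -∫ x, aeval x (X * hermite k) * exp (-x ^ 2) := by
        rw [← integral_neg]
        congr 1 with x
        rw [map_mul, aeval_X, ← gaussian_mul_gaussian]
        ring

theorem hermiteGaussianIntegral_one : hermiteGaussianIntegral 1 = 0 := by
  have h := hermiteGaussianIntegral_succ 0
  rw [show X * hermite 0 = hermite 1 by simp] at h
  change _ = -hermiteGaussianIntegral 1 at h
  linarith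

theorem hermiteGaussianIntegral_add_two (k : ℕ) :
    hermiteGaussianIntegral (k + 2) = -((k + 1) / 2) * hermiteGaussianIntegral k := by
  have h := hermiteGaussianIntegral_succ (k + 1)
  simp only [X_mul_hermite_succ, map_add, nsmul_eq_mul, map_mul, map_natCast, add_mul,
    mul_assoc] at h
  rw [integral_add (integrable_aeval_mul_gaussian_sq _)
    ((integrable_aeval_mul_gaussian_sq _).const_mul _), integral_const_mul] at h
  change _ = -(hermiteGaussianIntegral (k + 2) + _ * hermiteGaussianIntegral k) at h
  push_cast at h
  linarith

theorem sq_hermiteGaussianIntegral_le :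
    ∀ k : ℕ, hermiteGaussianIntegral k ^ 2 ≤ π * k.factorial / 2 ^ k
  | 0 => by simp [hermiteGaussianIntegral_zero, sq_sqrt pi_pos.le]
  | 1 => by simp [hermiteGaussianIntegral_one]; positivity
  | k + 2 => by
    have ih := sq_hermiteGaussianIntegral_le k
    have hk : ((k : ℝ) + 1) ^ 2 ≤ (k + 2) * (k + 1) := by nlinarith
    calc hermiteGaussianIntegral (k + 2) ^ 2
        = (k + 1) ^ 2 / 4 * hermiteGaussianIntegral k ^ 2 := by
          rw [hermiteGaussianIntegral_add_two]; ring
      _ ≤ (k + 1) ^ 2 / 4 * (π * k.factorial / 2 ^ k) := by gcongr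
      _ ≤ (k + 2) * (k + 1) / 4 * (π * k.factorial / 2 ^ k) := by gcongr
      _ = π * (k + 2).factorial / 2 ^ (k + 2) := by
          rw [Nat.factorial_succ, Nat.factorial_succ]; push_cast; ring

theorem integral_gaussMeasure_eq (f : ℝ → ℝ) :
    ∫ x, f x ∂gaussMeasure = (√(2 * π))⁻¹ * ∫ x, exp (-x ^ 2 / 2) * f x := by
  rw [gaussMeasure, integral_gaussianReal_eq_integral_smul one_ne_zero, ← integral_const_mul]
  congr 1 with x
  simp [gaussianPDFReal]
  ring

theorem integral_gaussianSigmoid_mul_hermiteN_succ (k : ℕ) :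
    ∫ x, gaussianSigmoid x * hermiteN (k + 1) x ∂gaussMeasure =
      hermiteGaussianIntegral k / (√(2 * π) * √((k + 1).factorial : ℝ)) := by
  have hibp := integral_mul_aeval_hermite_succ_mul_gaussian hasDerivAt_gaussianSigmoid
    norm_gaussianSigmoid_le norm_gaussian_le_one k
  have hJ : hermiteGaussianIntegral k =
      ∫ x, exp (-x ^ 2 / 2) * (aeval x (hermite k) * exp (-x ^ 2 / 2)) := by
    unfold hermiteGaussianIntegral
    congr 1 with x
    rw [← gaussian_mul_gaussian]
    ring
  have hdiv : ∫ x, exp (-x ^ 2 / 2) * (gaussianSigmoid x * hermiteN (k + 1) x) =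
      (∫ x, gaussianSigmoid x * (aeval x (hermite (k + 1)) * exp (-x ^ 2 / 2))) /
        √((k + 1).factorial : ℝ) := by
    rw [← integral_div]
    congr 1 with x
    rw [hermiteN_eq_aeval_hermite_div]
    ring
  rw [integral_gaussMeasure_eq, hdiv, hibp, ← hJ]
  field_simp

theorem sq_integral_gaussianSigmoid_mul_hermiteN_succ_le (k : ℕ) :
    (∫ x, gaussianSigmoid x * hermiteN (k + 1) x ∂gaussMeasure) ^ 2 ≤ 2⁻¹ ^ (k + 1) := by
  rw [integral_gaussianSigmoid_mul_hermiteN_succ, div_pow, mul_pow, sq_sqrt (by positivity),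
    sq_sqrt (by positivity)]
  calc hermiteGaussianIntegral k ^ 2 / (2 * π * (k + 1).factorial)
      ≤ π * k.factorial / 2 ^ k / (2 * π * (k + 1).factorial) := by
        gcongr; exact sq_hermiteGaussianIntegral_le k
    _ = 2⁻¹ ^ (k + 1) / (k + 1) := by
        rw [Nat.factorial_succ, inv_pow]; push_cast; field_simp; ring
    _ ≤ 2⁻¹ ^ (k + 1) := div_le_self (by positivity) (by linarith [k.cast_nonneg (α := ℝ)])

theorem tsum_tail_le_of_le_geometric {b : ℕ → ℝ} {r : ℝ} (hb0 : ∀ i, 0 ≤ b i)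
    (hr0 : 0 ≤ r) (hr1 : r < 1) (hb : ∀ i, b (i + 1) ≤ r ^ (i + 1)) (n : ℕ) :
    ∑' i, b (n + 1 + i) ≤ r ^ (n + 1) / (1 - r) := by
  have hle : ∀ i, b (n + 1 + i) ≤ r ^ (n + 1) * r ^ i := fun i => by
    simpa only [← pow_add, add_right_comm] using hb (n + i)
  have hs : Summable fun i => r ^ (n + 1) * r ^ i :=
    (summable_geometric_of_lt_one hr0 hr1).mul_left _
  calc ∑' i, b (n + 1 + i) ≤ ∑' i, r ^ (n + 1) * r ^ i :=
        (hs.of_nonneg_of_le (fun i => hb0 _) hle).tsum_le_tsum hle hs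
    _ = r ^ (n + 1) / (1 - r) := by
        rw [tsum_mul_left, tsum_geometric_of_lt_one hr0 hr1, div_eq_mul_inv]

/-- For the sigmoid activation σ(x) = ∫₀ˣ e^{-t²/2} dt, the Hermite tail satisfies
ε_σ(n) ≤ 2^{-n}. -/
theorem sigmoid_tail_bound (a : ℕ → ℝ)
    (ha : ∀ i, a i = ∫ x, (∫ t in (0 : ℝ)..x, Real.exp (-t ^ 2 / 2)) * hermiteN i x
        ∂gaussMeasure)
    (n : ℕ) :
    ∑' i, a (n + 1 + i) ^ 2 ≤ (2 : ℝ) ^ (-(n : ℤ)) := by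
  have hcoeff : ∀ i, a (i + 1) ^ 2 ≤ 2⁻¹ ^ (i + 1) := fun i => by
    rw [ha]
    exact sq_integral_gaussianSigmoid_mul_hermiteN_succ_le i
  calc ∑' i, a (n + 1 + i) ^ 2 ≤ 2⁻¹ ^ (n + 1) / (1 - 2⁻¹) :=
        tsum_tail_le_of_le_geometric (fun i => sq_nonneg (a i)) (by norm_num) (by norm_num)
          hcoeff n
    _ = 2 ^ (-(n : ℤ)) := by
        rw [zpow_neg, zpow_natCast, ← inv_pow, pow_succ]
        ring
end
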